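/- Fix h, α, z1, z2 : ℝ. Let R' be the 6×6 real matrix, indexed by (Fin 2) × (Fin 3) lexicographically, given in 2×2 block form as ![![A', B'], ![0, C']] with A' := ![![1, 2h(1+2αz1), 2h^2(1+2αz1)^2], ![0, 1, 2h(1+2αz1)], ![0,0,1]], B' := ![![−2h(1+αz2), 2h^2(1−2αz1−4α^2 z1 z2), 4h^3(1+2αz1−αz2−4α^3 z1^2 z2)], ![0, −2hαz2, 2h^2(1+2αz1−4α^2 z1 z2)], ![0, 0, 2h(1−αz2)]], C' := ![![1, −2h(1−2αz1), 2h^2(1−2αz1)^2], ![0, 1, −2h(1−2αz1)], ![0,0,1]]. Let R''(h, α, w1, w2) be the 6×6 real matrix indexed by (Fin 3) × (Fin 2) lexicographically, given in 3×3 block form as ![![A'', B'', C''], ![0, D'', E''], ![0, 0, F'']] with A'' := ![![1, 2h(1+αw1)], ![0,1]], B'' := ![![−2h(1+2αw2), 2h^2(1−2αw2−4α^2 w1 w2)], ![0, 2h(1−2αw2)]], C'' := ![![2h^2(1+2αw2)^2, −4h^3(1+2αw2−αw1−4α^3 w1 w2^2)], ![0, 2h^2(1−2αw2)^2]], D'' :=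 ![![1, 2hαw1], ![0,1]], E'' := ![![−2h(1+2αw2), 2h^2(1+2αw2−4α^2 w1 w2)], ![0, 2h(1−2αw2)]], F'' := ![![1, −2h(1−αw1)], ![0,1]]. Then for all k, l ∈ Fin 2 and m, n ∈ Fin 3: R'_{(k,m),(l,n)} = (R''(−h, α, z2, z1))_{(m,k),(n,l)}. -/

import Mathlib

open Matrix

/-- The coloured two-parametric Jordanian matrix `R_{h,α}^{1/2,z1;1,z2}` of `U_{h,α}(gl(2))`
for the coloured representation `(1/2, z1) ⊗ (1, z2)`, indexed by `Fin 2 × Fin 3`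
lexicographically, in 2×2 block form `(A', B'; 0, C')`. -/
def RhalfOne (h α z1 z2 : ℝ) : Matrix (Fin 2 × Fin 3) (Fin 2 × Fin 3) ℝ :=
  Matrix.of fun p r =>
    (![![!![1, 2 * h * (1 + 2 * α * z1), 2 * h ^ 2 * (1 + 2 * α * z1) ^ 2;
           0, 1, 2 * h * (1 + 2 * α * z1);
           0, 0, 1],
        !![-(2 * h * (1 + α * z2)), 2 * h ^ 2 * (1 - 2 * α * z1 - 4 * α ^ 2 * z1 * z2),
             4 * h ^ 3 * (1 + 2 * α * z1 - α * z2 - 4 * α ^ 3 * z1 ^ 2 * z2);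
           0, -(2 * h * α * z2), 2 * h ^ 2 * (1 + 2 * α * z1 - 4 * α ^ 2 * z1 * z2);
           0, 0, 2 * h * (1 - α * z2)]],
      ![0,
        !![1, -(2 * h * (1 - 2 * α * z1)), 2 * h ^ 2 * (1 - 2 * α * z1) ^ 2;
           0, 1, -(2 * h * (1 - 2 * α * z1));
           0, 0, 1]]] : Fin 2 → Fin 2 → Matrix (Fin 3) (Fin 3) ℝ) p.1 r.1 p.2 r.2

/-- The coloured two-parametric Jordanian matrix `R_{h,α}^{1,w1;1/2,w2}` of `U_{h,α}(gl(2))`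
for the coloured representation `(1, w1) ⊗ (1/2, w2)`, indexed by `Fin 3 × Fin 2`
lexicographically, in 3×3 block form `(A'', B'', C''; 0, D'', E''; 0, 0, F'')`. -/
def ROneHalf (h α w1 w2 : ℝ) : Matrix (Fin 3 × Fin 2) (Fin 3 × Fin 2) ℝ :=
  Matrix.of fun p r =>
    (![![!![1, 2 * h * (1 + α * w1); 0, 1],
        !![-(2 * h * (1 + 2 * α * w2)), 2 * h ^ 2 * (1 - 2 * α * w2 - 4 * α ^ 2 * w1 * w2);
           0, 2 * h * (1 - 2 * α * w2)],
        !![2 * h ^ 2 * (1 + 2 * α * w2) ^ 2,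
             -(4 * h ^ 3 * (1 + 2 * α * w2 - α * w1 - 4 * α ^ 3 * w1 * w2 ^ 2));
           0, 2 * h ^ 2 * (1 - 2 * α * w2) ^ 2]],
      ![0,
        !![1, 2 * h * α * w1; 0, 1],
        !![-(2 * h * (1 + 2 * α * w2)), 2 * h ^ 2 * (1 + 2 * α * w2 - 4 * α ^ 2 * w1 * w2);
           0, 2 * h * (1 - 2 * α * w2)]],
      ![0, 0,
        !![1, -(2 * h * (1 - α * w1)); 0, 1]]] :
      Fin 3 → Fin 3 → Matrix (Fin 2) (Fin 2) ℝ) p.1 r.1 p.2 r.2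

/-! Reading `R''(-h, α, z2, z1)` with its tensor factors swapped, its inner `2 × 2` blocks become the
blocks `A'`, `B'`, `0`, `C'` of `R'`: the vanishing block matches because every inner block of `R''`
is upper triangular, and the others match entrywise as polynomial identities in `h, α, z1, z2`. -/

section BlockEntries

variable (h α z1 z2 : ℝ) (m n : Fin 3)

theorem RhalfOne_apply_one_zero : RhalfOne h α z1 z2 (1, m) (0, n) = 0 :=
  rfl

theorem ROneHalf_apply_one_zero : ROneHalf h α z1 z2 (m, 1) (n, 0) = 0 := by
  fin_cases m <;> fin_cases n <;> rfl

theorem RhalfOne_apply_zero_zero :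
    RhalfOne h α z1 z2 (0, m) (0, n) = ROneHalf (-h) α z2 z1 (m, 0) (n, 0) := by
  fin_cases m <;> fin_cases n <;>
    simp only [RhalfOne, ROneHalf, of_apply, Fin.zero_eta, Fin.mk_one, Fin.reduceFinMk, cons_val,
      Matrix.zero_apply] <;> ring

theorem RhalfOne_apply_zero_one :
    RhalfOne h α z1 z2 (0, m) (1, n) = ROneHalf (-h) α z2 z1 (m, 0) (n, 1) := by
  fin_cases m <;> fin_cases n <;>
    simp only [RhalfOne, ROneHalf, of_apply, Fin.zero_eta, Fin.mk_one, Fin.reduceFinMk, cons_val,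
      Matrix.zero_apply] <;> ring

theorem RhalfOne_apply_one_one :
    RhalfOne h α z1 z2 (1, m) (1, n) = ROneHalf (-h) α z2 z1 (m, 1) (n, 1) := by
  fin_cases m <;> fin_cases n <;>
    simp only [RhalfOne, ROneHalf, of_apply, Fin.zero_eta, Fin.mk_one, Fin.reduceFinMk, cons_val,
      Matrix.zero_apply] <;> ring

end BlockEntries

/-- The paper's exchange symmetry
`(R_{h,α}^{1/2,z1;1,z2})_{km,ln} = (R_{−h,α}^{1,z2;1/2,z1})_{mk,nl}`. -/
theorem coloured_R_exchange_symmetry (h α z1 z2 : ℝ) :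
    ∀ (k l : Fin 2) (m n : Fin 3),
      RhalfOne h α z1 z2 (k, m) (l, n) = ROneHalf (-h) α z2 z1 (m, k) (n, l) := by
  intro k l m n
  fin_cases k <;> fin_cases l
  · exact RhalfOne_apply_zero_zero h α z1 z2 m n
  · exact RhalfOne_apply_zero_one h α z1 z2 m n
  · exact (RhalfOne_apply_one_zero h α z1 z2 m n).trans
      (ROneHalf_apply_one_zero (-h) α z2 z1 m n).symm
  · exact RhalfOne_apply_one_one h α z1 z2 m n
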